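/- arXiv:0906.2217 — 4 statements merged into one kernel-verified Lean document; each statement's English description precedes it below -/
import Mathlib

section
/- Fix an integer n ≥ 1 and δ ∈ (0,1). For α ∈ (0,1) and θ > −α, let U_1,…,U_n be independent with U_i distributed Beta(1−α, θ+iα). Then limsup of b(α,θ) · log P(∏_{i=1}^n (1−U_i) ≥ δ) is at most −n, where the limsup is taken as a(α,θ) → 0 over pairs (α,θ) with α ∈ (0,1) and θ + α > 0. -/
/-!
If all `U_i` lie in `(0,1)` and `∏ (1 - U_i) ≥ δ`, then every `U_i ≤ 1 - δ`. For `b ≤ 1` the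
Beta(1 - α, b) mass of `(0, 1 - δ]` is `O(b / δ)`, because the normalising constant
`Γ(1-α)Γ(b)/Γ(1-α+b)` is of order `1/b`. As `θ + iα ≤ (n+1) a(α,θ)`, the probability is positive
and at most `(K a)^n`, so `b(α,θ) log P ≤ n b log K - n`, which tends to `-n`.
-/

open MeasureTheory Filter Set

/-- The Beta distribution on `ℝ` with parameters `a, b`: the measure with density
`x^(a-1) * (1-x)^(b-1) / (Γ(a)Γ(b)/Γ(a+b))` on `(0,1)` with respect to Lebesgue measure. -/
noncomputable def betaMeasure (a b : ℝ) : Measure ℝ :=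
  volume.withDensity fun x =>
    ENNReal.ofReal (Set.indicator (Set.Ioo (0:ℝ) 1)
      (fun x => x ^ (a - 1) * (1 - x) ^ (b - 1) /
        (Real.Gamma a * Real.Gamma b / Real.Gamma (a + b))) x)

/-- `a(α,θ) = max(α, |θ|)`. -/
noncomputable def aParam (α θ : ℝ) : ℝ := max α |θ|

/-- `b(α,θ) = (-log a(α,θ))⁻¹`. -/
noncomputable def bParam (α θ : ℝ) : ℝ := (-Real.log (aParam α θ))⁻¹

/-- The filter describing `a(α,θ) → 0` over pairs `(α,θ)` with `α ∈ (0,1)` and `θ + α > 0`. -/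
noncomputable def smallParamFilter : Filter (ℝ × ℝ) :=
  (Filter.comap (fun p : ℝ × ℝ => aParam p.1 p.2) (nhdsWithin 0 (Set.Ioi 0))) ⊓
    Filter.principal {p : ℝ × ℝ | p.1 ∈ Set.Ioo (0:ℝ) 1 ∧ 0 < p.1 + p.2}

/-- The probability `P(∏_{i=1}^n (1-U_i) ≥ δ)`, where `U_1, …, U_n` are independent with
`U_i ~ Beta(1-α, θ+iα)`, expressed via the product of the Beta laws. -/
noncomputable def prodTailProb (α θ : ℝ) (n : ℕ) (δ : ℝ) : ℝ :=
  ((Measure.pi fun i : Fin n => betaMeasure (1 - α) (θ + ((i : ℕ) + 1) * α))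
    {x : Fin n → ℝ | δ ≤ ∏ i : Fin n, (1 - x i)}).toReal

open Topology
open ProbabilityTheory (beta beta_pos)

namespace Real

lemma one_le_Gamma_of_le_one {s : ℝ} (hs : 0 < s) (hs1 : s ≤ 1) : 1 ≤ Gamma s := by
  simpa using Gamma_strictAntiOn_Ioc.antitoneOn ⟨hs, hs1⟩ ⟨one_pos, le_rfl⟩ hs1

lemma one_half_le_Gamma_add_one {s : ℝ} (hs : 0 ≤ s) (hs1 : s ≤ 1) :
    1 / 2 ≤ Gamma (s + 1) := by
  have h2 : 1 ≤ Gamma (s + 1 + 1) := by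
    simpa [Gamma_two] using Gamma_strictMonoOn_Ici.monotoneOn (mem_Ici.2 le_rfl)
      (mem_Ici.2 (by linarith : (2:ℝ) ≤ s + 1 + 1)) (by linarith)
  rw [Gamma_add_one (by linarith)] at h2
  nlinarith [Gamma_pos_of_pos (by linarith : 0 < s + 1)]

lemma Gamma_le_two {s : ℝ} (hs : 1 / 2 ≤ s) (hs2 : s ≤ 2) : Gamma s ≤ 2 := by
  have hsqrt : √π ≤ 2 := by
    rw [sqrt_le_left (by norm_num)]; linarith [pi_le_four]
  calc Gamma s ≤ max (Gamma (1 / 2)) (Gamma 2) :=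
        convexOn_Gamma.le_on_segment (by norm_num) (by norm_num)
          (by rw [segment_eq_Icc (by norm_num)]; exact ⟨hs, hs2⟩)
    _ ≤ 2 := by rw [Gamma_one_half_eq, Gamma_two]; exact max_le hsqrt one_le_two

end Real

lemma inv_beta_le {a b : ℝ} (ha : 1 / 2 ≤ a) (ha1 : a ≤ 1) (hb : 0 < b) (hb1 : b ≤ 1) :
    (beta a b)⁻¹ ≤ 4 * b := by
  have hΓa := Real.one_le_Gamma_of_le_one (by linarith) ha1
  have hΓb : 1 / 2 ≤ b * Real.Gamma b := by
    rw [← Real.Gamma_add_one hb.ne']; exact Real.one_half_le_Gamma_add_one hb.le hb1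
  have hΓab := Real.Gamma_le_two (s := a + b) (by linarith) (by linarith)
  rw [beta, inv_div, div_le_iff₀ (by positivity)]
  nlinarith

instance (a b : ℝ) : SigmaFinite (betaMeasure a b) := by
  unfold betaMeasure; infer_instance

lemma betaMeasure_apply (a b : ℝ) {s : Set ℝ} (hs : MeasurableSet s) :
    betaMeasure a b s = ∫⁻ x in s ∩ Ioo 0 1,
      ENNReal.ofReal (x ^ (a - 1) * (1 - x) ^ (b - 1) / beta a b) := by
  rw [betaMeasure, ← Function.comp_def ENNReal.ofReal, ← indicator_comp_of_zero ENNReal.ofReal_zero,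
    withDensity_indicator measurableSet_Ioo, withDensity_apply _ hs,
    Measure.restrict_restrict hs]
  rfl

lemma ae_betaMeasure_mem_Ioo (a b : ℝ) : ∀ᵐ x ∂betaMeasure a b, x ∈ Ioo 0 1 := by
  change betaMeasure a b (Ioo 0 1)ᶜ = 0
  rw [betaMeasure_apply a b measurableSet_Ioo.compl,
    compl_inter_self, Measure.restrict_empty, lintegral_zero_measure]

lemma betaMeasure_Ioo_pos {a b c : ℝ} (ha : 0 < a) (hb : 0 < b) (hc : 0 < c) :
    0 < betaMeasure a b (Ioo 0 c) := by
  rw [betaMeasure_apply a b measurableSet_Ioo, setLIntegral_pos_iff (by fun_prop)]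
  calc 0 < volume (Ioo 0 (min c 1)) := by simp [hc]
    _ ≤ _ := measure_mono fun x ⟨hx0, hxm⟩ ↦ by
      have hxc : x < c := hxm.trans_le (min_le_left _ _)
      have hx1 : x < 1 := hxm.trans_le (min_le_right _ _)
      refine ⟨(ENNReal.ofReal_pos.2 ?_).ne', ⟨hx0, hxc⟩, hx0, hx1⟩
      exact div_pos (mul_pos (Real.rpow_pos_of_pos hx0 _) (Real.rpow_pos_of_pos (by linarith) _))
        (beta_pos ha hb)

lemma setLIntegral_Ioc_rpow_sub_one {a t : ℝ} (ha : 0 < a) (ht : 0 ≤ t) :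
    ∫⁻ x in Ioc 0 t, ENNReal.ofReal (x ^ (a - 1)) = ENNReal.ofReal (t ^ a / a) := by
  have hint : IntegrableOn (fun x : ℝ ↦ x ^ (a - 1)) (Ioc 0 t) := by
    rw [← intervalIntegrable_iff_integrableOn_Ioc_of_le ht]
    exact intervalIntegral.intervalIntegrable_rpow' (by linarith)
  rw [← ofReal_integral_eq_lintegral_ofReal hint
      ((ae_restrict_mem measurableSet_Ioc).mono fun x hx ↦ Real.rpow_nonneg hx.1.le _),
    ← intervalIntegral.integral_of_le ht, integral_rpow (Or.inl (by linarith))]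
  simp [Real.zero_rpow ha.ne']

lemma betaMeasure_Iic_one_sub_le {a b δ : ℝ} (ha : 0 < a) (hb : 0 < b) (hb1 : b ≤ 1)
    (hδ : 0 < δ) (hδ1 : δ ≤ 1) :
    betaMeasure a b (Iic (1 - δ)) ≤
      ENNReal.ofReal ((a * δ * beta a b)⁻¹) := by
  set B := beta a b
  have hB : 0 < B := beta_pos ha hb
  have hdensity : ∀ x ∈ Ioc 0 (1 - δ), x ^ (a - 1) * (1 - x) ^ (b - 1) / B ≤
      x ^ (a - 1) * (δ * B)⁻¹ := fun x ⟨hx0, hxδ⟩ ↦ by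
    have h1x : (1 - x) ^ (b - 1) ≤ δ⁻¹ := calc
      (1 - x) ^ (b - 1) ≤ δ ^ (b - 1) := Real.rpow_le_rpow_of_nonpos hδ (by linarith) (by linarith)
      _ ≤ δ ^ (-1 : ℝ) := Real.rpow_le_rpow_of_exponent_ge hδ hδ1 (by linarith)
      _ = δ⁻¹ := Real.rpow_neg_one δ
    rw [mul_inv, ← mul_assoc, div_eq_mul_inv]
    gcongr
  rw [betaMeasure_apply a b measurableSet_Iic]
  calc _ ≤ ∫⁻ x in Ioc 0 (1 - δ),
        ENNReal.ofReal (x ^ (a - 1) * (1 - x) ^ (b - 1) / B) :=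
        lintegral_mono_set fun x hx ↦ ⟨hx.2.1, hx.1⟩
    _ ≤ ∫⁻ x in Ioc 0 (1 - δ), ENNReal.ofReal (x ^ (a - 1)) * ENNReal.ofReal (δ * B)⁻¹ :=
        setLIntegral_mono (by fun_prop) fun x hx ↦ by
          rw [← ENNReal.ofReal_mul (Real.rpow_nonneg hx.1.le _)]
          exact ENNReal.ofReal_le_ofReal (hdensity x hx)
    _ = ENNReal.ofReal ((1 - δ) ^ a / a * (δ * B)⁻¹) := by
        rw [lintegral_mul_const _ (by fun_prop), setLIntegral_Ioc_rpow_sub_one ha (by linarith),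
          ENNReal.ofReal_mul (by positivity)]
    _ ≤ _ := by
        refine ENNReal.ofReal_le_ofReal ?_
        calc (1 - δ) ^ a / a * (δ * B)⁻¹ ≤ 1 / a * (δ * B)⁻¹ := by
              gcongr; exact Real.rpow_le_one (by linarith) (by linarith) ha.le
          _ = (a * δ * B)⁻¹ := by rw [mul_assoc a, mul_inv a, one_div]

lemma betaMeasure_Iic_one_sub_le_mul {a b δ : ℝ} (ha : 1 / 2 ≤ a) (ha1 : a ≤ 1) (hb : 0 < b)
    (hb1 : b ≤ 1) (hδ : 0 < δ) (hδ1 : δ ≤ 1) :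
    betaMeasure a b (Iic (1 - δ)) ≤ ENNReal.ofReal (8 * b / δ) := by
  refine (betaMeasure_Iic_one_sub_le (by linarith) hb hb1 hδ hδ1).trans
    (ENNReal.ofReal_le_ofReal ?_)
  have ha' : a⁻¹ ≤ 2 := by rw [inv_le_comm₀ (by linarith) two_pos]; linarith
  calc (a * δ * beta a b)⁻¹
      = a⁻¹ * δ⁻¹ * (beta a b)⁻¹ := by rw [mul_inv, mul_inv]
    _ ≤ 2 * δ⁻¹ * (4 * b) :=
        mul_le_mul (by gcongr) (inv_beta_le ha ha1 hb hb1)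
          (inv_nonneg.2 (beta_pos (by linarith) hb).le) (by positivity)
    _ = 8 * b / δ := by ring

lemma Finset.prod_le_of_mem_Icc {ι : Type*} [Fintype ι] {f : ι → ℝ}
    (hf : ∀ j, f j ∈ Set.Icc 0 1) (i : ι) : ∏ j, f j ≤ f i := by
  classical
  rw [← Finset.mul_prod_erase _ _ (Finset.mem_univ i)]
  exact mul_le_of_le_one_right (hf i).1
    (Finset.prod_le_one (fun j _ ↦ (hf j).1) (fun j _ ↦ (hf j).2))

lemma one_sub_card_mul_le_prod_one_sub {ι : Type*} [Fintype ι] {c : ℝ} {x : ι → ℝ}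
    (hc : c ≤ 1) (hx : ∀ i, x i ≤ c) : 1 - Fintype.card ι * c ≤ ∏ i, (1 - x i) :=
  calc 1 - Fintype.card ι * c = 1 + Fintype.card ι * (-c) := by ring
    _ ≤ (1 + -c) ^ Fintype.card ι := one_add_mul_le_pow (by linarith) _
    _ = ∏ _i : ι, (1 - c) := by rw [Finset.prod_const, Finset.card_univ, ← sub_eq_add_neg]
    _ ≤ ∏ i, (1 - x i) :=
        Finset.prod_le_prod (fun _ _ ↦ by linarith) (fun i _ ↦ by linarith [hx i])

lemma measure_pi_prod_one_sub_ge_le {ι : Type*} [Fintype ι] (μ : ι → Measure ℝ)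
    [∀ i, SigmaFinite (μ i)] (hμ : ∀ i, ∀ᵐ x ∂μ i, x ∈ Icc 0 1) (δ : ℝ) :
    Measure.pi μ {x | δ ≤ ∏ i, (1 - x i)} ≤ ∏ i, μ i (Iic (1 - δ)) := by
  rw [← Measure.pi_pi]
  refine measure_mono_ae ?_
  have hx : ∀ᵐ x ∂Measure.pi μ, ∀ i, x i ∈ Icc 0 1 :=
    ae_all_iff.2 fun i ↦ Measure.tendsto_eval_ae_ae (hμ i)
  filter_upwards [hx] with x hx hδx i _
  have := Finset.prod_le_of_mem_Icc (f := fun j ↦ 1 - x j)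
    (fun j ↦ ⟨by linarith [(hx j).2], by linarith [(hx j).1]⟩) i
  exact le_sub_comm.1 (hδx.trans this)

noncomputable def betaProdMeasure (α θ : ℝ) (n : ℕ) : Measure (Fin n → ℝ) :=
  Measure.pi fun i : Fin n ↦ betaMeasure (1 - α) (θ + ((i : ℕ) + 1) * α)

lemma prodTailProb_eq (α θ : ℝ) (n : ℕ) (δ : ℝ) :
    prodTailProb α θ n δ = (betaProdMeasure α θ n {x | δ ≤ ∏ i, (1 - x i)}).toReal := rfl

section Parameters

variable {α θ δ : ℝ} {n : ℕ}

lemma aParam_pos (hα : 0 < α) : 0 < aParam α θ := hα.trans_le (le_max_left _ _)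

lemma beta_param_pos (i : Fin n) (hα : 0 < α) (hθα : 0 < α + θ) :
    0 < θ + ((i : ℕ) + 1) * α := by
  nlinarith [(Nat.cast_nonneg i : (0 : ℝ) ≤ i)]

lemma beta_param_le_aParam (i : Fin n) (hα : 0 < α) :
    θ + ((i : ℕ) + 1) * α ≤ (n + 1) * aParam α θ := by
  have hi : ((i : ℕ) : ℝ) + 1 ≤ n := by exact_mod_cast i.isLt
  have hαa : α ≤ aParam α θ := le_max_left _ _
  have hθa : θ ≤ aParam α θ := (le_abs_self θ).trans (le_max_right _ _)
  nlinarith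

lemma betaProdMeasure_tail_pos (hn : 1 ≤ n) (hδ0 : 0 < δ) (hδ1 : δ < 1) (hα0 : 0 < α)
    (hα1 : α < 1) (hθα : 0 < α + θ) :
    0 < betaProdMeasure α θ n {x | δ ≤ ∏ i, (1 - x i)} := by
  have hn0 : (0 : ℝ) < n := by exact_mod_cast hn
  set c := (1 - δ) / n
  have hc0 : 0 < c := div_pos (by linarith) hn0
  have hc1 : c ≤ 1 := (div_le_one hn0).2 (by linarith [(Nat.one_le_cast.2 hn : (1 : ℝ) ≤ n)])
  have hsub : (univ.pi fun _ ↦ Ioo 0 c) ⊆ {x : Fin n → ℝ | δ ≤ ∏ i, (1 - x i)} := fun x hx ↦ by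
    have := one_sub_card_mul_le_prod_one_sub hc1 fun i ↦ (hx i (mem_univ i)).2.le
    rwa [Fintype.card_fin, mul_div_cancel₀ _ hn0.ne', sub_sub_cancel] at this
  refine lt_of_lt_of_le ?_ (measure_mono hsub)
  rw [betaProdMeasure, Measure.pi_pi]
  exact CanonicallyOrderedAdd.prod_pos.2 fun i _ ↦
    betaMeasure_Ioo_pos (by linarith) (beta_param_pos i hα0 hθα) hc0

lemma betaProdMeasure_tail_le (hδ0 : 0 < δ) (hδ1 : δ < 1) (hα0 : 0 < α) (hθα : 0 < α + θ)
    (hsmall : 2 * (n + 1) * aParam α θ ≤ 1) :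
    betaProdMeasure α θ n {x | δ ≤ ∏ i, (1 - x i)} ≤
      ENNReal.ofReal ((8 * (n + 1) / δ * aParam α θ) ^ n) := by
  have hα : α ≤ 1 / 2 := by
    have : α ≤ aParam α θ := le_max_left _ _
    nlinarith [(Nat.cast_nonneg n : (0 : ℝ) ≤ n)]
  calc _ ≤ ∏ i : Fin n, betaMeasure (1 - α) (θ + ((i : ℕ) + 1) * α) (Iic (1 - δ)) :=
        measure_pi_prod_one_sub_ge_le _
          (fun i ↦ (ae_betaMeasure_mem_Ioo _ _).mono fun _ h ↦ Ioo_subset_Icc_self h) δ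
    _ ≤ ∏ _i : Fin n, ENNReal.ofReal (8 * (n + 1) / δ * aParam α θ) :=
        Finset.prod_le_prod' fun i _ ↦ by
          have hb := beta_param_le_aParam (θ := θ) i hα0
          refine (betaMeasure_Iic_one_sub_le_mul (by linarith) (by linarith)
            (beta_param_pos i hα0 hθα) (by nlinarith) hδ0 hδ1.le).trans
            (ENNReal.ofReal_le_ofReal ?_)
          rw [div_mul_eq_mul_div, mul_assoc]
          gcongr
    _ = _ := by rw [Finset.prod_const, Finset.card_univ, Fintype.card_fin,
          ENNReal.ofReal_pow (by have := aParam_pos (θ := θ) hα0; positivity)]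

lemma prodTailProb_pos_and_le (hn : 1 ≤ n) (hδ0 : 0 < δ) (hδ1 : δ < 1) (hα0 : 0 < α)
    (hα1 : α < 1) (hθα : 0 < α + θ) (hsmall : 2 * (n + 1) * aParam α θ ≤ 1) :
    0 < prodTailProb α θ n δ ∧ prodTailProb α θ n δ ≤ (8 * (n + 1) / δ * aParam α θ) ^ n := by
  have hle := betaProdMeasure_tail_le hδ0 hδ1 hα0 hθα hsmall
  rw [prodTailProb_eq]
  exact ⟨ENNReal.toReal_pos (betaProdMeasure_tail_pos hn hδ0 hδ1 hα0 hα1 hθα).ne'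
      (ne_top_of_le_ne_top ENNReal.ofReal_ne_top hle),
    ENNReal.toReal_le_of_le_ofReal (by have := aParam_pos (θ := θ) hα0; positivity) hle⟩

end Parameters

lemma inv_neg_log_mul_log_le {a p K : ℝ} (n : ℕ) (hK : 0 < K) (ha0 : 0 < a) (ha1 : a < 1)
    (hp : 0 < p) (hpa : p ≤ (K * a) ^ n) :
    (-Real.log a)⁻¹ * Real.log p ≤ n * Real.log K * (-Real.log a)⁻¹ - n := by
  have hlog : 0 < -Real.log a := neg_pos.2 (Real.log_neg ha0 ha1)
  have hlogp : Real.log p ≤ n * (Real.log K + Real.log a) := by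
    rw [← Real.log_mul hK.ne' ha0.ne', ← Real.log_pow]
    exact Real.log_le_log hp hpa
  calc (-Real.log a)⁻¹ * Real.log p ≤ (-Real.log a)⁻¹ * (n * (Real.log K + Real.log a)) := by
        gcongr
    _ = n * Real.log K * (-Real.log a)⁻¹ - n := by
        have : Real.log a ≠ 0 := by linarith
        field_simp
        ring

lemma limsup_inv_neg_log_mul_log_le {ι : Type*} {l : Filter ι} {a P : ι → ℝ} {K : ℝ} (n : ℕ)
    (hK : 0 < K) (ha : Tendsto a l (𝓝[>] 0))
    (hP : ∀ᶠ i in l, 0 < P i ∧ P i ≤ (K * a i) ^ n) :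
    limsup (fun i ↦ (((-Real.log (a i))⁻¹ * Real.log (P i) : ℝ) : EReal)) l ≤
      ((-n : ℝ) : EReal) := by
  have hinv : Tendsto (fun i ↦ (-Real.log (a i))⁻¹) l (𝓝 0) :=
    tendsto_inv_atTop_zero.comp
      (tendsto_neg_atBot_atTop.comp (Real.tendsto_log_nhdsGT_zero.comp ha))
  have hbound : Tendsto (fun i ↦ ((n * Real.log K * (-Real.log (a i))⁻¹ - n : ℝ) : EReal)) l
      (𝓝 ((-n : ℝ) : EReal)) :=
    EReal.tendsto_coe.2 (by simpa using (hinv.const_mul (n * Real.log K)).sub_const (n : ℝ))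
  have hle : ∀ᶠ i in l, (-Real.log (a i))⁻¹ * Real.log (P i) ≤
      n * Real.log K * (-Real.log (a i))⁻¹ - n := by
    filter_upwards [hP, ha (Ioo_mem_nhdsGT one_pos)] with i ⟨hP0, hPa⟩ ⟨ha0, ha1⟩
    exact inv_neg_log_mul_log_le n hK ha0 ha1 hP0 hPa
  refine le_of_forall_gt_imp_ge_of_dense fun c hc ↦ limsup_le_of_le (by isBoundedDefault) ?_
  filter_upwards [hle, (tendsto_order.1 hbound).2 c hc] with i hi hic
  exact (EReal.coe_le_coe_iff.2 hi).trans hic.le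

/-- For fixed `n ≥ 1` and `δ ∈ (0,1)`,
`limsup b(α,θ) log P(∏_{i=1}^n (1-U_i) ≥ δ) ≤ -n` as `a(α,θ) → 0` over pairs `(α,θ)` with
`α ∈ (0,1)` and `θ + α > 0`, where `U_1, …, U_n` are independent, `U_i ~ Beta(1-α, θ+iα)`. -/
theorem limsup_log_prob_prod_ge_le (n : ℕ) (hn : 1 ≤ n) (δ : ℝ) (hδ : δ ∈ Set.Ioo (0:ℝ) 1) :
    Filter.limsup
      (fun p : ℝ × ℝ =>
        ((bParam p.1 p.2 * Real.log (prodTailProb p.1 p.2 n δ) : ℝ) : EReal))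
      smallParamFilter ≤ (-(n : ℝ) : EReal) := by
  obtain ⟨hδ0, hδ1⟩ := hδ
  have ha : Tendsto (fun p : ℝ × ℝ ↦ aParam p.1 p.2) smallParamFilter (𝓝[>] 0) :=
    tendsto_comap.mono_left inf_le_left
  have hsmall : ∀ᶠ p : ℝ × ℝ in smallParamFilter, 2 * (n + 1) * aParam p.1 p.2 ≤ 1 := by
    filter_upwards [ha (Ioo_mem_nhdsGT (by positivity : (0 : ℝ) < 1 / (2 * (n + 1))))]
      with p ⟨_, hp⟩
    rw [lt_div_iff₀ (by positivity)] at hp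
    linarith
  have hparams : ∀ᶠ p : ℝ × ℝ in smallParamFilter, p.1 ∈ Ioo 0 1 ∧ 0 < p.1 + p.2 :=
    mem_inf_of_right (mem_principal_self _)
  refine limsup_inv_neg_log_mul_log_le n (K := 8 * (n + 1) / δ) (by positivity) ha ?_
  filter_upwards [hsmall, hparams] with p hp ⟨⟨hα0, hα1⟩, hθα⟩
  exact prodTailProb_pos_and_le hn hδ0 hδ1 hα0 hα1 hθα hp
end

section
/- Fix α ∈ (0,1), let a be a scaling function, and let x ≥ 0. Then lim_{θ→∞} (a(θ)/θ) · log(1 − F_θ((θ/a(θ))x + β(α,θ))) = −x. -/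
open MeasureTheory Filter Set

/-- `c_α = α / Γ(1-α)`. -/
noncomputable def cAlpha (α : ℝ) : ℝ := α / Real.Gamma (1 - α)

/-- `β(α,θ) = log θ - (α+1) log log θ - log Γ(1-α)`. -/
noncomputable def betaShift (α θ : ℝ) : ℝ :=
  Real.log θ - (α + 1) * Real.log (Real.log θ) - Real.log (Real.Gamma (1 - α))

/-- The distribution function of the largest jump `V₁(T)`:
`F_θ(s) = (1 + c_α s^{-α} ∫_1^∞ z^{-(1+α)} e^{-sz} dz)^{-θ/α}` for `s > 0`, and `0` for `s ≤ 0`. -/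
noncomputable def Fdist (α θ s : ℝ) : ℝ :=
  if 0 < s then
    (1 + cAlpha α * s ^ (-α) *
        ∫ z in Set.Ioi (1:ℝ), z ^ (-(1 + α)) * Real.exp (-(s * z))) ^ (-(θ / α))
  else 0


/-!
Writing `F_θ(s) = exp (-u)` with `u = (θ/α) log (1 + c_α s^{-α} I(s))`, the integral `I(s)` lies
within constant factors of `e^{-s}/s`, so `u` is comparable to `(θ/α) c_α s^{-(α+1)} e^{-s}`.
The shift `β(α,θ)` is chosen so that at `s = w + β(α,θ)` this main term is exactly
`(log θ / s)^{α+1} e^{-w}`. Since `log (1 - e^{-u}) = log u + O(u)`, this gives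
`log (1 - F_θ(s)) = (α+1) log (log θ / s) - w + O(1)`, and with `w = θx/a(θ)` the factor `a(θ)/θ`
turns this into `-x + o(1)`, because `log (log θ / s)` is squeezed between `-w / log θ` and `log 2`.
-/

open Real

lemma log_one_add_le_self {x : ℝ} (hx : -1 < x) : log (1 + x) ≤ x := by
  linarith [log_le_sub_one_of_pos (show 0 < 1 + x by linarith)]

lemma half_le_log_one_add {x : ℝ} (h0 : 0 ≤ x) (h1 : x ≤ 1) : x / 2 ≤ log (1 + x) :=
  calc x / 2 ≤ x / (1 + x) := div_le_div_of_nonneg_left h0 (by linarith) (by linarith)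
    _ = 1 - (1 + x)⁻¹ := by field_simp; ring
    _ ≤ log (1 + x) := one_sub_inv_le_log_of_pos (by linarith)

lemma log_sub_le_log_one_sub_exp_neg {u : ℝ} (hu : 0 < u) : log u - u ≤ log (1 - exp (-u)) := by
  have h : u * exp (-u) ≤ 1 - exp (-u) := by
    have hexp : exp u * exp (-u) = 1 := by rw [← exp_add, add_neg_cancel, exp_zero]
    nlinarith [add_one_le_exp u, exp_pos (-u)]
  calc log u - u = log (u * exp (-u)) := by rw [log_mul hu.ne' (exp_pos _).ne', log_exp]; ring
    _ ≤ log (1 - exp (-u)) := log_le_log (by positivity) h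

lemma log_one_sub_exp_neg_le_log {u : ℝ} (hu : 0 < u) : log (1 - exp (-u)) ≤ log u :=
  log_le_log (by linarith [exp_lt_one_iff.2 (neg_lt_zero.2 hu)]) (by linarith [add_one_le_exp (-u)])

lemma neg_div_le_log_div_add {L w β : ℝ} (hL : 0 < L) (hw : 0 ≤ w) (hβ : 0 < β) (hβL : β ≤ L) :
    -(w / L) ≤ log (L / (w + β)) := by
  have hwL : log (1 + w / L) ≤ w / L := log_one_add_le_self (by linarith [div_nonneg hw hL.le])
  calc -(w / L) ≤ -log (1 + w / L) := neg_le_neg hwL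
    _ = log (L / (w + L)) := by rw [← log_inv]; congr 1; field_simp; ring
    _ ≤ log (L / (w + β)) := by gcongr

section TailIntegral

variable {p s : ℝ}

lemma integrableOn_rpow_mul_exp_neg_mul (hp : p ≤ 0) (hs : 0 < s) :
    IntegrableOn (fun z : ℝ => z ^ p * exp (-(s * z))) (Ioi 1) := by
  refine (exp_neg_integrableOn_Ioi 1 hs).mono' ?_ ?_
  · refine ContinuousOn.aestronglyMeasurable (fun z hz => ?_) measurableSet_Ioi
    have hz0 : z ≠ 0 := (zero_lt_one.trans hz).ne'
    exact ((continuousAt_rpow_const z p (Or.inl hz0)).mul (by fun_prop)).continuousWithinAt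
  · filter_upwards [ae_restrict_mem measurableSet_Ioi] with z hz
    have hz0 : 0 < z := zero_lt_one.trans hz
    rw [norm_of_nonneg (by positivity), neg_mul]
    exact mul_le_of_le_one_left (exp_nonneg _) (rpow_le_one_of_one_le_of_nonpos hz.le hp)

lemma integral_exp_neg_mul_Ioi_one (hs : 0 < s) :
    ∫ z in Ioi (1 : ℝ), exp (-(s * z)) = exp (-s) / s := by
  simpa [neg_mul, neg_div, div_neg] using integral_exp_mul_Ioi (neg_lt_zero.2 hs) 1

lemma setIntegral_rpow_mul_exp_neg_mul_le (hp : p ≤ 0) (hs : 0 < s) :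
    ∫ z in Ioi (1 : ℝ), z ^ p * exp (-(s * z)) ≤ exp (-s) / s := by
  rw [← integral_exp_neg_mul_Ioi_one hs]
  refine setIntegral_mono_on (integrableOn_rpow_mul_exp_neg_mul hp hs) ?_ measurableSet_Ioi
    fun z hz => mul_le_of_le_one_left (exp_nonneg _) (rpow_le_one_of_one_le_of_nonpos hz.le hp)
  simpa only [neg_mul] using exp_neg_integrableOn_Ioi 1 hs

/-- On `z ≥ 1` we have `z ^ p ≥ exp (p * (z - 1))`, since `log z ≤ z - 1` and `p ≤ 0`. -/
lemma exp_neg_div_le_setIntegral_rpow_mul_exp_neg_mul (hp : p ≤ 0) (hs : 0 < s) :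
    exp (-s) / (s - p) ≤ ∫ z in Ioi (1 : ℝ), z ^ p * exp (-(s * z)) := by
  have hps : p - s < 0 := by linarith
  have hcomparison : ∫ z in Ioi (1 : ℝ), exp (-p) * exp ((p - s) * z) = exp (-s) / (s - p) := by
    rw [integral_const_mul, integral_exp_mul_Ioi hps, mul_one, mul_div_assoc', mul_neg,
      ← exp_add, neg_div, ← div_neg, neg_sub]
    ring_nf
  rw [← hcomparison]
  refine setIntegral_mono_on ((integrableOn_exp_mul_Ioi hps 1).const_mul _)
    (integrableOn_rpow_mul_exp_neg_mul hp hs) measurableSet_Ioi fun z hz => ?_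
  have hz0 : 0 < z := zero_lt_one.trans hz
  have hlog : p * (z - 1) ≤ p * log z :=
    mul_le_mul_of_nonpos_left (log_le_sub_one_of_pos hz0) hp
  rw [rpow_def_of_pos hz0, ← exp_add, ← exp_add]
  exact exp_le_exp.2 (by linear_combination hlog)

end TailIntegral

noncomputable def tailIntegral (α s : ℝ) : ℝ :=
  ∫ z in Ioi (1 : ℝ), z ^ (-(1 + α)) * exp (-(s * z))

lemma tailIntegral_nonneg (α s : ℝ) : 0 ≤ tailIntegral α s :=
  setIntegral_nonneg measurableSet_Ioi fun z hz => by
    have hz0 : 0 < z := zero_lt_one.trans hz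
    positivity

lemma cAlpha_pos {α : ℝ} (hα : α ∈ Ioo 0 1) : 0 < cAlpha α :=
  div_pos hα.1 (Gamma_pos_of_pos (by linarith [hα.2]))

section Fdist

variable {α θ s : ℝ}

lemma rpow_mul_tailIntegral_le (hα : -1 ≤ α) (hs : 0 < s) :
    s ^ (-α) * tailIntegral α s ≤ s ^ (-(α + 1)) * exp (-s) := by
  rw [neg_add', rpow_sub_one hs.ne', div_mul_eq_mul_div, mul_div_assoc]
  exact mul_le_mul_of_nonneg_left
    (setIntegral_rpow_mul_exp_neg_mul_le (by linarith) hs) (by positivity)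

lemma rpow_mul_exp_div_le_rpow_mul_tailIntegral (hα : -1 ≤ α) (hs : 1 ≤ s) :
    s ^ (-(α + 1)) * exp (-s) / (2 + α) ≤ s ^ (-α) * tailIntegral α s := by
  have hs0 : 0 < s := by linarith
  have hI := exp_neg_div_le_setIntegral_rpow_mul_exp_neg_mul (p := -(1 + α)) (by linarith) hs0
  have hden : s - -(1 + α) ≤ (2 + α) * s := by nlinarith
  calc s ^ (-(α + 1)) * exp (-s) / (2 + α) = s ^ (-α) * (exp (-s) / ((2 + α) * s)) := by
        rw [neg_add', rpow_sub_one hs0.ne']; field_simp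
    _ ≤ s ^ (-α) * tailIntegral α s := by
        gcongr
        exact (div_le_div_of_nonneg_left (exp_nonneg _) (by linarith) hden).trans hI

lemma log_one_add_cAlpha_mul_tailIntegral_mem (hα : α ∈ Ioo 0 1) (hs : 1 ≤ s)
    (hc : cAlpha α * exp (-s) ≤ 1) :
    cAlpha α * s ^ (-(α + 1)) * exp (-s) / (2 * (2 + α))
        ≤ log (1 + cAlpha α * s ^ (-α) * tailIntegral α s) ∧
      log (1 + cAlpha α * s ^ (-α) * tailIntegral α s) ≤ cAlpha α * s ^ (-(α + 1)) * exp (-s) := by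
  have hc0 := cAlpha_pos hα
  have hα1 : -1 ≤ α := by linarith [hα.1]
  have hs0 : 0 < s := by linarith
  have hM0 : 0 ≤ cAlpha α * s ^ (-(α + 1)) * exp (-s) := by positivity
  have hM1 : cAlpha α * s ^ (-(α + 1)) * exp (-s) ≤ 1 := by
    calc cAlpha α * s ^ (-(α + 1)) * exp (-s) ≤ cAlpha α * 1 * exp (-s) := by
          gcongr; exact rpow_le_one_of_one_le_of_nonpos hs (by linarith)
      _ ≤ 1 := by rwa [mul_one]
  set M := cAlpha α * s ^ (-(α + 1)) * exp (-s)
  set G := cAlpha α * s ^ (-α) * tailIntegral α s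
  have hGlow : M / (2 + α) ≤ G := by
    simpa only [M, G, mul_assoc, mul_div_assoc] using
      mul_le_mul_of_nonneg_left (rpow_mul_exp_div_le_rpow_mul_tailIntegral hα1 hs) hc0.le
  have hGup : G ≤ M := by
    simpa only [M, G, mul_assoc] using
      mul_le_mul_of_nonneg_left (rpow_mul_tailIntegral_le hα1 hs0) hc0.le
  have hG0 : 0 ≤ G := le_trans (div_nonneg hM0 (by linarith)) hGlow
  refine ⟨?_, (log_one_add_le_self (by linarith : -1 < G)).trans hGup⟩
  calc M / (2 * (2 + α)) = M / (2 + α) / 2 := by rw [div_div, mul_comm]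
    _ ≤ G / 2 := by gcongr
    _ ≤ log (1 + G) := half_le_log_one_add hG0 (hGup.trans hM1)

lemma Fdist_eq_exp_neg (hα : α ∈ Ioo 0 1) (hs : 0 < s) :
    Fdist α θ s = exp (-(θ / α * log (1 + cAlpha α * s ^ (-α) * tailIntegral α s))) := by
  have hG : 0 < 1 + cAlpha α * s ^ (-α) * tailIntegral α s := by
    have := cAlpha_pos hα
    have := tailIntegral_nonneg α s
    positivity
  rw [Fdist, if_pos hs]
  change (1 + cAlpha α * s ^ (-α) * tailIntegral α s) ^ (-(θ / α)) = _
  rw [rpow_def_of_pos hG]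
  ring_nf

lemma exp_neg_betaShift (hα : α < 1) (hθ : 1 < θ) :
    exp (-betaShift α θ) = log θ ^ (α + 1) * Gamma (1 - α) / θ := by
  have hΓ : 0 < Gamma (1 - α) := Gamma_pos_of_pos (by linarith)
  rw [betaShift, show -(log θ - (α + 1) * log (log θ) - log (Gamma (1 - α)))
      = log (log θ) * (α + 1) + log (Gamma (1 - α)) - log θ by ring,
    exp_sub, exp_add, exp_log hΓ, exp_log (by linarith : 0 < θ), ← rpow_def_of_pos (log_pos hθ)]

lemma div_mul_cAlpha_rpow_exp_neg_add_betaShift {w : ℝ} (hα : α ∈ Ioo 0 1) (hθ : 1 < θ)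
    (hs : 0 < w + betaShift α θ) :
    θ / α * (cAlpha α * (w + betaShift α θ) ^ (-(α + 1)) * exp (-(w + betaShift α θ)))
      = (log θ / (w + betaShift α θ)) ^ (α + 1) * exp (-w) := by
  have hΓ : 0 < Gamma (1 - α) := Gamma_pos_of_pos (by linarith [hα.2])
  have hα0 : α ≠ 0 := hα.1.ne'
  rw [neg_add w, exp_add, exp_neg_betaShift hα.2 hθ, cAlpha, div_rpow (log_pos hθ).le hs.le,
    rpow_neg hs.le]
  field_simp

lemma log_one_sub_Fdist_add_betaShift_mem {w : ℝ} (hα : α ∈ Ioo 0 1) (hθ : 1 < θ) (hw : 0 ≤ w)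
    (hβ : log θ / 2 ≤ betaShift α θ) (hs : 1 ≤ w + betaShift α θ)
    (hc : cAlpha α * exp (-(w + betaShift α θ)) ≤ 1) :
    (α + 1) * log (log θ / (w + betaShift α θ)) - w - (log (2 * (2 + α)) + 2 ^ (α + 1))
        ≤ log (1 - Fdist α θ (w + betaShift α θ)) ∧
      log (1 - Fdist α θ (w + betaShift α θ))
        ≤ (α + 1) * log (log θ / (w + betaShift α θ)) - w := by
  have hL : 0 < log θ := log_pos hθ
  have hK : 0 < 2 * (2 + α) := by linarith [hα.1]
  have hθα : 0 < θ / α := div_pos (by linarith) hα.1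
  set s := w + betaShift α θ
  have hs0 : 0 < s := by linarith
  set r := log θ / s
  have hr0 : 0 < r := by positivity
  have hr2 : r ≤ 2 := by rw [div_le_iff₀ hs0]; linarith
  set T := r ^ (α + 1) * exp (-w) with hT_def
  have hT0 : 0 < T := by positivity
  have hT2 : T ≤ 2 ^ (α + 1) :=
    calc T ≤ r ^ (α + 1) * 1 := by rw [hT_def]; gcongr; exact exp_le_one_iff.2 (by linarith)
      _ ≤ 2 ^ (α + 1) := by rw [mul_one]; gcongr; linarith [hα.1]
  have hlogT : log T = (α + 1) * log r - w := by
    rw [hT_def, log_mul (by positivity) (exp_pos _).ne', log_rpow hr0, log_exp, sub_eq_add_neg]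
  have hmain : θ / α * (cAlpha α * s ^ (-(α + 1)) * exp (-s)) = T :=
    div_mul_cAlpha_rpow_exp_neg_add_betaShift hα hθ hs0
  obtain ⟨hGlow, hGup⟩ := log_one_add_cAlpha_mul_tailIntegral_mem hα hs hc
  set u := θ / α * log (1 + cAlpha α * s ^ (-α) * tailIntegral α s)
  have hu_low : T / (2 * (2 + α)) ≤ u := by
    rw [← hmain, mul_div_assoc]
    exact mul_le_mul_of_nonneg_left hGlow hθα.le
  have hu_up : u ≤ T := hmain ▸ mul_le_mul_of_nonneg_left hGup hθα.le
  have hu0 : 0 < u := lt_of_lt_of_le (by positivity) hu_low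
  rw [Fdist_eq_exp_neg hα hs0]
  constructor
  · calc (α + 1) * log r - w - (log (2 * (2 + α)) + 2 ^ (α + 1))
          ≤ log T - log (2 * (2 + α)) - T := by rw [hlogT]; linarith
      _ = log (T / (2 * (2 + α))) - T := by rw [log_div hT0.ne' hK.ne']
      _ ≤ log u - u := by gcongr
      _ ≤ log (1 - exp (-u)) := log_sub_le_log_one_sub_exp_neg hu0
  · calc log (1 - exp (-u)) ≤ log u := log_one_sub_exp_neg_le_log hu0
      _ ≤ log T := log_le_log hu0 hu_up
      _ = (α + 1) * log r - w := hlogT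

end Fdist

section Asymptotics

variable {α : ℝ}

lemma eventually_betaShift_mem (hα : -1 < α) :
    ∀ᶠ θ in atTop, log θ / 2 ≤ betaShift α θ ∧ betaShift α θ ≤ log θ := by
  set g : ℝ → ℝ := fun y => (α + 1) * log y + log (Gamma (1 - α))
  have hg_top : Tendsto g atTop atTop :=
    tendsto_atTop_add_const_right _ _ (tendsto_log_atTop.const_mul_atTop (by linarith))
  have hg_small : g =o[atTop] id :=
    (isLittleO_log_id_atTop.const_mul_left _).add
      (Asymptotics.isLittleO_const_left.2 (Or.inr tendsto_abs_atTop_atTop))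
  have hg : ∀ᶠ y in atTop, 0 ≤ g y ∧ g y ≤ y / 2 := by
    filter_upwards [hg_top.eventually_ge_atTop 0, hg_small.bound (by norm_num : (0 : ℝ) < 1 / 2),
      eventually_ge_atTop 0] with y h0 h1 hy
    rw [norm_of_nonneg h0, id, norm_of_nonneg hy] at h1
    exact ⟨h0, by linarith⟩
  filter_upwards [tendsto_log_atTop.eventually hg] with θ hθ
  simp only [betaShift, g] at hθ ⊢
  constructor <;> linarith

lemma tendsto_betaShift_atTop (hα : -1 < α) : Tendsto (betaShift α) atTop atTop :=
  tendsto_atTop_mono' _ ((eventually_betaShift_mem hα).mono fun _ h => h.1)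
    (tendsto_log_atTop.atTop_div_const two_pos)

end Asymptotics

lemma mul_log_one_sub_Fdist_mem {α θ t x : ℝ} (hα : α ∈ Ioo 0 1) (hθ : 1 < θ) (ht : 0 < t)
    (hx : 0 ≤ x) (hβ : log θ / 2 ≤ betaShift α θ ∧ betaShift α θ ≤ log θ)
    (hs : 1 ≤ θ / t * x + betaShift α θ)
    (hc : cAlpha α * exp (-(θ / t * x + betaShift α θ)) ≤ 1) :
    -x - (α + 1) * (x / log θ) - t / θ * (log (2 * (2 + α)) + 2 ^ (α + 1))
        ≤ t / θ * log (1 - Fdist α θ (θ / t * x + betaShift α θ)) ∧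
      t / θ * log (1 - Fdist α θ (θ / t * x + betaShift α θ)) ≤ -x + t / θ * ((α + 1) * log 2) := by
  have hL : 0 < log θ := log_pos hθ
  have hw : 0 ≤ θ / t * x := by positivity
  have hb : 0 < t / θ := by positivity
  have hbw : t / θ * (θ / t * x) = x := by field_simp
  obtain ⟨hlow, hup⟩ := log_one_sub_Fdist_add_betaShift_mem hα hθ hw hβ.1 hs hc
  have hr_up : log (log θ / (θ / t * x + betaShift α θ)) ≤ log 2 :=
    log_le_log (by positivity) (by rw [div_le_iff₀ (by linarith)]; linarith)
  have hr_low := neg_div_le_log_div_add hL hw (by linarith) hβ.2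
  have hα1 : 0 ≤ α + 1 := by linarith [hα.1]
  constructor
  · have h1 := mul_le_mul_of_nonneg_left hlow hb.le
    have h2 := mul_le_mul_of_nonneg_left hr_low (mul_nonneg hb.le hα1)
    have h3 : t / θ * (α + 1) * -(θ / t * x / log θ) = -((α + 1) * (x / log θ)) := by
      field_simp
    linarith
  · have h1 := mul_le_mul_of_nonneg_left hup hb.le
    have h2 := mul_le_mul_of_nonneg_left hr_up (mul_nonneg hb.le hα1)
    linarith

theorem mdp_tail_nonneg_general (α : ℝ) (hα : α ∈ Set.Ioo (0:ℝ) 1)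
    (a : ℝ → ℝ) (hapos : ∀ θ > (0:ℝ), 0 < a θ)
    (ha' : Filter.Tendsto (fun θ => a θ / θ) Filter.atTop (nhds 0))
    (x : ℝ) (hx : 0 ≤ x) :
    Filter.Tendsto
      (fun θ : ℝ => a θ / θ * Real.log (1 - Fdist α θ (θ / a θ * x + betaShift α θ)))
      Filter.atTop (nhds (-x)) := by
  have hα1 : -1 < α := by linarith [hα.1]
  have hw : ∀ᶠ θ in atTop, 0 ≤ θ / a θ * x :=
    (eventually_gt_atTop 0).mono fun θ hθ => by have := hapos θ hθ; positivity
  have hs : Tendsto (fun θ => θ / a θ * x + betaShift α θ) atTop atTop :=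
    tendsto_atTop_add_left_of_le' _ 0 hw (tendsto_betaShift_atTop hα1)
  have hc : Tendsto (fun θ => cAlpha α * exp (-(θ / a θ * x + betaShift α θ))) atTop (nhds 0) := by
    simpa using (tendsto_exp_neg_atTop_nhds_zero.comp hs).const_mul (cAlpha α)
  have hbounds := (eventually_gt_atTop 1).and <| (eventually_betaShift_mem hα1).and <|
    (hs.eventually_ge_atTop 1).and (hc.eventually (eventually_le_nhds zero_lt_one))
  replace hbounds := hbounds.mono fun θ ⟨hθ, hβ, hs1, hc1⟩ =>
    mul_log_one_sub_Fdist_mem hα hθ (hapos θ (by linarith)) hx hβ hs1 hc1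
  refine tendsto_of_tendsto_of_tendsto_of_le_of_le' ?_ ?_
    (hbounds.mono fun _ h => h.1) (hbounds.mono fun _ h => h.2)
  · have hlog : Tendsto (fun θ => x / log θ) atTop (nhds 0) :=
      tendsto_const_nhds.div_atTop tendsto_log_atTop
    simpa using (tendsto_const_nhds.sub (hlog.const_mul (α + 1))).sub
      (ha'.mul_const (log (2 * (2 + α)) + 2 ^ (α + 1)))
  · simpa using tendsto_const_nhds.add (ha'.mul_const ((α + 1) * log 2))

/-- For `α ∈ (0,1)`, a scaling function `a` (`a(θ) → ∞`, `a(θ)/θ → 0`) and `x ≥ 0`,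
`lim_{θ→∞} (a(θ)/θ) log (1 - F_θ((θ/a(θ)) x + β(α,θ))) = -x`. -/
theorem mdp_tail_nonneg (α : ℝ) (hα : α ∈ Set.Ioo (0:ℝ) 1)
    (a : ℝ → ℝ) (hapos : ∀ θ > (0:ℝ), 0 < a θ)
    (ha : Filter.Tendsto a Filter.atTop Filter.atTop)
    (ha' : Filter.Tendsto (fun θ => a θ / θ) Filter.atTop (nhds 0))
    (x : ℝ) (hx : 0 ≤ x) :
    Filter.Tendsto
      (fun θ : ℝ => a θ / θ * Real.log (1 - Fdist α θ (θ / a θ * x + betaShift α θ)))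
      Filter.atTop (nhds (-x)) :=
  mdp_tail_nonneg_general α hα a hapos ha' x hx
end

section
/- Fix α ∈ (0,1) and an integer m ≥ 2, and let z ∈ ℝ. Then the infimum of Λ*(x,y) over all (x,y) ∈ ℝ² satisfying y Γ(1−α)/Γ(m−α) − m x = z equals z² / (2 σ²_{α,m}). -/
/-!
Writing `g = Γ(m-α)/Γ(1-α)`, `Λ(s,t) = ½(s² + 2mg·st + c·t²)` where
`c - (mg)² = g²σ²_{α,m}`, so completing the square gives the closed form
`Λ*(x,y) = x²/2 + (y/g - mx)²/(2σ²_{α,m})`. On the line `y/g - mx = z` this is `x²/2 + z²/(2σ²)`,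
minimised at `x = 0`. Positivity of `σ²_{α,m}` for `m ≥ 2` follows by induction on `m` from
`Γ(s+1) = sΓ(s)`, with equality `σ²_{α,1} = 0` as the base case.
-/

open Real

/-- The limiting cumulant generating function
`Λ(s,t) = ½(s² + (2Γ(m-α)Γ(m+1)/(Γ(m)Γ(1-α))) st + (Γ(2m-α)/Γ(1-α) + α(Γ(m-α)/Γ(1-α))²) t²)`. -/
noncomputable def Lam (α : ℝ) (m : ℕ) (s t : ℝ) : ℝ :=
  (1 / 2) * (s ^ 2 +
    (2 * Real.Gamma (m - α) * Real.Gamma (m + 1) / (Real.Gamma m * Real.Gamma (1 - α))) * s * t +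
    (Real.Gamma (2 * m - α) / Real.Gamma (1 - α) +
      α * (Real.Gamma (m - α) / Real.Gamma (1 - α)) ^ 2) * t ^ 2)

/-- The Fenchel–Legendre transform `Λ*(x,y) = sup_{s,t} { sx + ty - Λ(s,t) }`. -/
noncomputable def LamStar (α : ℝ) (m : ℕ) (x y : ℝ) : ℝ :=
  ⨆ p : ℝ × ℝ, (p.1 * x + p.2 * y - Lam α m p.1 p.2)

/-- `σ²_{α,m} = Γ(2m-α)Γ(1-α)/Γ(m-α)² + α - m²`. -/
noncomputable def sigmaSq (α : ℝ) (m : ℕ) : ℝ :=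
  Real.Gamma (2 * m - α) * Real.Gamma (1 - α) / (Real.Gamma (m - α)) ^ 2 + α - m ^ 2

section GammaInequality

variable {α : ℝ}

lemma succ_sq_sub_mul_sq_lt (hα : α < 1) {n : ℝ} (hn : 1 ≤ n) :
    ((n + 1) ^ 2 - α) * (n - α) ^ 2 < (2 * n + 1 - α) * (2 * n - α) * (n ^ 2 - α) := by
  -- the difference is `n²(3n² - 2αn - 1)`
  have h : 0 < 3 * n ^ 2 - 2 * α * n - 1 := by nlinarith
  nlinarith [mul_pos (by positivity : (0 : ℝ) < n ^ 2) h]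

lemma succ_sq_sub_mul_Gamma_sq_lt (hα : α < 1) {n : ℝ} (hn : 1 ≤ n)
    (h : (n ^ 2 - α) * Gamma (n - α) ^ 2 ≤ Gamma (2 * n - α) * Gamma (1 - α)) :
    ((n + 1) ^ 2 - α) * Gamma (n + 1 - α) ^ 2 < Gamma (2 * (n + 1) - α) * Gamma (1 - α) := by
  have hΓ : 0 < Gamma (n - α) := Gamma_pos_of_pos (by linarith)
  have hK : 0 < (2 * n + 1 - α) * (2 * n - α) := by nlinarith
  rw [show n + 1 - α = (n - α) + 1 by ring, Gamma_add_one (by linarith),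
    show 2 * (n + 1) - α = (2 * n - α + 1) + 1 by ring, Gamma_add_one (by linarith),
    Gamma_add_one (by linarith)]
  calc ((n + 1) ^ 2 - α) * ((n - α) * Gamma (n - α)) ^ 2
      = ((n + 1) ^ 2 - α) * (n - α) ^ 2 * Gamma (n - α) ^ 2 := by ring
    _ < (2 * n + 1 - α) * (2 * n - α) * (n ^ 2 - α) * Gamma (n - α) ^ 2 :=
        mul_lt_mul_of_pos_right (succ_sq_sub_mul_sq_lt hα hn) (by positivity)
    _ = (2 * n + 1 - α) * (2 * n - α) * ((n ^ 2 - α) * Gamma (n - α) ^ 2) := by ring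
    _ ≤ (2 * n + 1 - α) * (2 * n - α) * (Gamma (2 * n - α) * Gamma (1 - α)) := by gcongr
    _ = (2 * n - α + 1) * ((2 * n - α) * Gamma (2 * n - α)) * Gamma (1 - α) := by ring

lemma sq_sub_mul_Gamma_sq_le (hα : α < 1) {m : ℕ} (hm : 1 ≤ m) :
    ((m : ℝ) ^ 2 - α) * Gamma (m - α) ^ 2 ≤ Gamma (2 * m - α) * Gamma (1 - α) := by
  induction m, hm using Nat.le_induction with
  | base =>
    rw [show (2 : ℝ) * (1 : ℕ) - α = (1 - α) + 1 by push_cast; ring, Gamma_add_one (by linarith)]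
    push_cast
    nlinarith
  | succ n hn ih =>
    push_cast
    exact (succ_sq_sub_mul_Gamma_sq_lt hα (by exact_mod_cast hn) ih).le

lemma sq_sub_mul_Gamma_sq_lt (hα : α < 1) {m : ℕ} (hm : 2 ≤ m) :
    ((m : ℝ) ^ 2 - α) * Gamma (m - α) ^ 2 < Gamma (2 * m - α) * Gamma (1 - α) := by
  obtain ⟨n, rfl⟩ : ∃ n, m = n + 1 := ⟨m - 1, by omega⟩
  push_cast
  exact succ_sq_sub_mul_Gamma_sq_lt hα (by exact_mod_cast (by omega : 1 ≤ n))
    (sq_sub_mul_Gamma_sq_le hα (by omega))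

lemma sigmaSq_pos (hα : α < 1) {m : ℕ} (hm : 2 ≤ m) : 0 < sigmaSq α m := by
  have hm' : (2 : ℝ) ≤ m := by exact_mod_cast hm
  have hΓ : 0 < Gamma (m - α) := Gamma_pos_of_pos (by linarith)
  have h := sq_sub_mul_Gamma_sq_lt hα hm
  rw [sigmaSq, ← sub_pos]
  rw [← lt_div_iff₀ (by positivity)] at h
  linarith

end GammaInequality

lemma iSup_linear_sub_quadraticForm {b c : ℝ} (h : b ^ 2 < c) (x y : ℝ) :
    ⨆ p : ℝ × ℝ, (p.1 * x + p.2 * y - (1 / 2) * (p.1 ^ 2 + 2 * b * p.1 * p.2 + c * p.2 ^ 2)) =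
      x ^ 2 / 2 + (y - b * x) ^ 2 / (2 * (c - b ^ 2)) := by
  have hd : 0 < c - b ^ 2 := sub_pos.2 h
  set t₀ := (y - b * x) / (c - b ^ 2)
  have key : ∀ p : ℝ × ℝ,
      p.1 * x + p.2 * y - (1 / 2) * (p.1 ^ 2 + 2 * b * p.1 * p.2 + c * p.2 ^ 2) =
        x ^ 2 / 2 + (y - b * x) ^ 2 / (2 * (c - b ^ 2)) -
          ((p.1 + b * p.2 - x) ^ 2 / 2 + (c - b ^ 2) / 2 * (p.2 - t₀) ^ 2) := by
    intro p
    simp only [t₀]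
    field_simp
    ring
  have hle : ∀ p : ℝ × ℝ,
      p.1 * x + p.2 * y - (1 / 2) * (p.1 ^ 2 + 2 * b * p.1 * p.2 + c * p.2 ^ 2) ≤
        x ^ 2 / 2 + (y - b * x) ^ 2 / (2 * (c - b ^ 2)) := fun p =>
    (key p).le.trans (sub_le_self _ (by positivity))
  exact le_antisymm (ciSup_le hle)
    (le_ciSup_of_le ⟨_, Set.forall_mem_range.2 hle⟩ (x - b * t₀, t₀) (le_of_eq (by rw [key]; ring)))

lemma LamStar_eq {α : ℝ} (hα : α < 1) {m : ℕ} (hm : 2 ≤ m) (x y : ℝ) :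
    LamStar α m x y =
      x ^ 2 / 2 + (y * Gamma (1 - α) / Gamma (m - α) - m * x) ^ 2 / (2 * sigmaSq α m) := by
  have hm' : (2 : ℝ) ≤ m := by exact_mod_cast hm
  have hΓ1 : 0 < Gamma (1 - α) := Gamma_pos_of_pos (by linarith)
  have hΓm : 0 < Gamma (m - α) := Gamma_pos_of_pos (by linarith)
  have hΓm' : 0 < Gamma m := Gamma_pos_of_pos (by linarith)
  have hσ := sigmaSq_pos hα hm
  set g := Gamma (m - α) / Gamma (1 - α) with hg
  set c := Gamma (2 * m - α) / Gamma (1 - α) + α * g ^ 2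
  have hdisc : c - (m * g) ^ 2 = g ^ 2 * sigmaSq α m := by
    simp only [c, hg, sigmaSq]
    field_simp
  have hLam : ∀ s t, Lam α m s t = (1 / 2) * (s ^ 2 + 2 * (m * g) * s * t + c * t ^ 2) := by
    intro s t
    rw [Lam, Gamma_add_one (by positivity)]
    simp only [c, hg]
    field_simp
  simp only [LamStar, hLam]
  rw [iSup_linear_sub_quadraticForm (sub_pos.1 (hdisc ▸ mul_pos (pow_pos (div_pos hΓm hΓ1) 2) hσ)),
    hdisc]
  simp only [hg]
  field_simp

/-- For `α ∈ (0,1)`, integer `m ≥ 2` and `z ∈ ℝ`, the infimum of `Λ*(x,y)` over the set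
`{(x,y) : yΓ(1-α)/Γ(m-α) - mx = z}` equals `z²/(2σ²_{α,m})`. -/
theorem inf_LamStar_on_line (α : ℝ) (hα : α ∈ Set.Ioo (0:ℝ) 1) (m : ℕ) (hm : 2 ≤ m) (z : ℝ) :
    sInf {v : ℝ | ∃ x y : ℝ,
        y * Real.Gamma (1 - α) / Real.Gamma (m - α) - m * x = z ∧ v = LamStar α m x y} =
      z ^ 2 / (2 * sigmaSq α m) := by
  have hσ := sigmaSq_pos hα.2 hm
  have hm' : (2 : ℝ) ≤ m := by exact_mod_cast hm
  have hΓ1 : Gamma (1 - α) ≠ 0 := (Gamma_pos_of_pos (by linarith [hα.2])).ne'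
  have hΓm : Gamma (m - α) ≠ 0 := (Gamma_pos_of_pos (by linarith [hα.2])).ne'
  have hline : z * Gamma (m - α) / Gamma (1 - α) * Gamma (1 - α) / Gamma (m - α) - m * 0 = z := by
    rw [mul_zero, sub_zero]
    field_simp
  refine IsLeast.csInf_eq ⟨⟨0, _, hline, ?_⟩, ?_⟩
  · rw [LamStar_eq hα.2 hm, hline]
    ring
  · rintro v ⟨x, y, hxy, rfl⟩
    rw [LamStar_eq hα.2 hm, hxy]
    exact le_add_of_nonneg_left (by positivity)
end

section
/- Fix an integer n ≥ 1 and define C_{α,θ,n} = Γ(θ+1)Γ(θ/α+n)α^{n−1} / (Γ(θ+nα)Γ(θ/α+1)Γ(1−α)^n). Then b(α,θ) · log C_{α,θ,n} converges to −n as a(α,θ) → 0 over pairs (α,θ) with α ∈ (0,1) and θ > 0. -/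
open MeasureTheory Filter Set

/-- The normalizing constant
`C_{α,θ,n} = Γ(θ+1)Γ(θ/α+n)α^{n-1} / (Γ(θ+nα)Γ(θ/α+1)Γ(1-α)^n)` in the joint density of the
first `n` coordinates of the two-parameter Poisson–Dirichlet distribution. -/
noncomputable def Cconst (α θ : ℝ) (n : ℕ) : ℝ :=
  Real.Gamma (θ + 1) * Real.Gamma (θ / α + n) * α ^ (n - 1) /
    (Real.Gamma (θ + n * α) * Real.Gamma (θ / α + 1) * Real.Gamma (1 - α) ^ n)

/-- The filter describing `a(α,θ) → 0` over pairs `(α,θ)` with `α ∈ (0,1)` and `θ > 0`. -/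
noncomputable def smallParamFilter' : Filter (ℝ × ℝ) :=
  (Filter.comap (fun p : ℝ × ℝ => aParam p.1 p.2) (nhdsWithin 0 (Set.Ioi 0))) ⊓
    Filter.principal {p : ℝ × ℝ | p.1 ∈ Set.Ioo (0:ℝ) 1 ∧ 0 < p.2}

/-! The product formula turns `C_{α,θ,n}` into `∏_{k=1}^n (θ + kα)` times Gamma values near `Γ(1) = 1`.
Each factor `θ + kα` lies between `a` and `(1 + k) · a`, so `b · log (θ + kα) = -1 + O(b)`,
while `b → 0` kills the logarithms of the Gamma values. -/

open Real Topology

theorem Real.Gamma_add_nat_eq_mul_prod {x : ℝ} (hx : ∀ k : ℕ, x ≠ -k) (n : ℕ) :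
    Gamma (x + n) = Gamma x * ∏ k ∈ Finset.range n, (x + k) := by
  induction n with
  | zero => simp
  | succ m ih =>
    have hxm : x + m ≠ 0 := fun h => hx m (by linarith)
    rw [Nat.cast_succ, ← add_assoc, Gamma_add_one hxm, ih, Finset.prod_range_succ]
    ring

theorem Gamma_div_add_succ_mul_pow {α : ℝ} (hα : 0 < α) {θ : ℝ} (hθ : 0 ≤ θ) (n : ℕ) :
    Gamma (θ / α + (n + 1 : ℕ)) * α ^ n =
      Gamma (θ / α + 1) * ∏ k ∈ Finset.range n, (θ + (k + 1) * α) := by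
  have hx : ∀ k : ℕ, θ / α + 1 ≠ -k := fun k h => by
    have : 0 < θ / α + 1 := by positivity
    linarith [(Nat.cast_nonneg k : (0 : ℝ) ≤ k)]
  have hpow := Finset.prod_mul_pow_card (s := Finset.range n) (f := fun k : ℕ => θ / α + 1 + k)
    (b := α)
  rw [Finset.card_range] at hpow
  rw [Nat.cast_succ, add_comm (n : ℝ), ← add_assoc, Gamma_add_nat_eq_mul_prod hx, mul_assoc, hpow]
  congr 1
  refine Finset.prod_congr rfl fun k _ => ?_
  field_simp
  ring

theorem Cconst_succ {α θ : ℝ} (hα : α ∈ Ioo (0 : ℝ) 1) (hθ : 0 < θ) (m : ℕ) :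
    Cconst α θ (m + 1) =
      Gamma (θ + 1) * (∏ k ∈ Finset.range (m + 1), (θ + (k + 1) * α)) /
        (Gamma (θ + (m + 1) * α + 1) * Gamma (1 - α) ^ (m + 1)) := by
  obtain ⟨hα0, hα1⟩ := hα
  have hlast : 0 < θ + (m + 1) * α := by positivity
  have hΓθα : 0 < Gamma (θ / α + 1) := Gamma_pos_of_pos (by positivity)
  have hΓlast : 0 < Gamma (θ + (m + 1) * α) := Gamma_pos_of_pos hlast
  have hΓα : 0 < Gamma (1 - α) := Gamma_pos_of_pos (by linarith)
  have hprod := Gamma_div_add_succ_mul_pow hα0 hθ.le m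
  rw [Cconst, Nat.add_sub_cancel, Gamma_add_one hlast.ne', Finset.prod_range_succ, mul_assoc,
    hprod, div_eq_div_iff (by positivity) (by positivity)]
  push_cast
  ring

theorem log_Cconst_succ {α θ : ℝ} (hα : α ∈ Ioo (0 : ℝ) 1) (hθ : 0 < θ) (m : ℕ) :
    log (Cconst α θ (m + 1)) =
      (∑ k ∈ Finset.range (m + 1), log (θ + (k + 1) * α)) +
        (log (Gamma (θ + 1)) - log (Gamma (θ + (m + 1) * α + 1)) -
          (m + 1) * log (Gamma (1 - α))) := by
  obtain ⟨hα0, hα1⟩ := hα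
  have hΓθ : 0 < Gamma (θ + 1) := Gamma_pos_of_pos (by linarith)
  have hΓlast : 0 < Gamma (θ + (m + 1) * α + 1) := Gamma_pos_of_pos (by positivity)
  have hΓα : 0 < Gamma (1 - α) := Gamma_pos_of_pos (by linarith)
  have hfactor : ∀ k ∈ Finset.range (m + 1), θ + ((k : ℝ) + 1) * α ≠ 0 :=
    fun k _ => by positivity
  have hprod : 0 < ∏ k ∈ Finset.range (m + 1), (θ + ((k : ℝ) + 1) * α) :=
    Finset.prod_pos fun k _ => by positivity
  rw [Cconst_succ ⟨hα0, hα1⟩ hθ m, log_div (by positivity) (by positivity),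
    log_mul hΓθ.ne' hprod.ne', log_mul hΓlast.ne' (by positivity), log_pow, log_prod hfactor]
  push_cast
  ring

theorem bParam_mul_log_aParam {α θ : ℝ} (h : log (aParam α θ) ≠ 0) :
    bParam α θ * log (aParam α θ) = -1 := by
  rw [bParam, inv_neg, neg_mul, inv_mul_cancel₀ h]

theorem min_one_mul_aParam_le {α θ c : ℝ} (hα : 0 ≤ α) (hθ : 0 ≤ θ) (hc : 0 ≤ c) :
    min 1 c * aParam α θ ≤ θ + c * α := by
  rw [aParam, abs_of_nonneg hθ]
  rcases le_total α θ with h | h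
  · rw [max_eq_right h]
    nlinarith [min_le_left 1 c]
  · rw [max_eq_left h]
    nlinarith [min_le_right 1 c]

theorem le_one_add_mul_aParam {α θ c : ℝ} (hc : 0 ≤ c) :
    θ + c * α ≤ (1 + c) * aParam α θ := by
  have hαa : α ≤ aParam α θ := le_max_left _ _
  have hθa : θ ≤ aParam α θ := (le_abs_self θ).trans (le_max_right _ _)
  nlinarith

theorem abs_log_le_of_mem_Icc {l u x : ℝ} (hl : 0 < l) (hx : x ∈ Icc l u) :
    |log x| ≤ |log l| + |log u| := by
  have hlo := log_le_log hl hx.1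
  have hhi := log_le_log (hl.trans_le hx.1) hx.2
  rw [abs_le]
  constructor <;> linarith [neg_abs_le (log l), le_abs_self (log u), abs_nonneg (log l),
    abs_nonneg (log u)]

theorem tendsto_log_Gamma_of_tendsto_one {ι : Type*} {l : Filter ι} {f : ι → ℝ}
    (hf : Tendsto f l (𝓝 1)) : Tendsto (fun i => log (Gamma (f i))) l (𝓝 0) := by
  have hΓ : ContinuousAt Gamma 1 :=
    (differentiableAt_Gamma fun m h => by linarith [(Nat.cast_nonneg m : (0 : ℝ) ≤ m)]).continuousAt
  have hlogΓ : ContinuousAt (fun x => log (Gamma x)) 1 :=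
    (continuousAt_log (by simp)).comp hΓ
  simpa [Function.comp_def] using hlogΓ.tendsto.comp hf

theorem eventually_mem_smallParamFilter' :
    ∀ᶠ p : ℝ × ℝ in smallParamFilter', p.1 ∈ Ioo (0 : ℝ) 1 ∧ 0 < p.2 :=
  le_principal_iff.mp inf_le_right

theorem tendsto_aParam_smallParamFilter' :
    Tendsto (fun p : ℝ × ℝ => aParam p.1 p.2) smallParamFilter' (𝓝[>] 0) :=
  tendsto_comap.mono_left inf_le_left

theorem tendsto_fst_smallParamFilter' : Tendsto Prod.fst smallParamFilter' (𝓝 0) :=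
  squeeze_zero' (eventually_mem_smallParamFilter'.mono fun _ hp => hp.1.1.le)
    (Eventually.of_forall fun _ => le_max_left _ _)
    (tendsto_aParam_smallParamFilter'.mono_right nhdsWithin_le_nhds)

theorem tendsto_snd_smallParamFilter' : Tendsto Prod.snd smallParamFilter' (𝓝 0) :=
  squeeze_zero' (eventually_mem_smallParamFilter'.mono fun _ hp => hp.2.le)
    (Eventually.of_forall fun _ => (le_abs_self _).trans (le_max_right _ _))
    (tendsto_aParam_smallParamFilter'.mono_right nhdsWithin_le_nhds)

theorem tendsto_bParam_smallParamFilter' :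
    Tendsto (fun p : ℝ × ℝ => bParam p.1 p.2) smallParamFilter' (𝓝 0) :=
  tendsto_inv_atTop_zero.comp <|
    tendsto_neg_atBot_atTop.comp (tendsto_log_nhdsGT_zero.comp tendsto_aParam_smallParamFilter')

theorem eventually_log_aParam_ne_zero :
    ∀ᶠ p : ℝ × ℝ in smallParamFilter', log (aParam p.1 p.2) ≠ 0 := by
  have ha := tendsto_aParam_smallParamFilter'
  filter_upwards [ha.eventually eventually_mem_nhdsWithin,
    (ha.mono_right nhdsWithin_le_nhds).eventually_lt_const one_pos] with p hpos hlt1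
  exact (log_neg hpos hlt1).ne

theorem tendsto_bParam_mul_log_snd_add_mul {c : ℝ} (hc : 0 < c) :
    Tendsto (fun p : ℝ × ℝ => bParam p.1 p.2 * log (p.2 + c * p.1)) smallParamFilter'
      (𝓝 (-1)) := by
  set r : ℝ × ℝ → ℝ := fun p => (p.2 + c * p.1) / aParam p.1 p.2
  have hr : ∀ᶠ p in smallParamFilter', r p ∈ Icc (min 1 c) (1 + c) := by
    filter_upwards [eventually_mem_smallParamFilter'] with p ⟨⟨hα, _⟩, hθ⟩
    have ha : 0 < aParam p.1 p.2 := hα.trans_le (le_max_left _ _)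
    exact ⟨(le_div_iff₀ ha).mpr (min_one_mul_aParam_le hα.le hθ.le hc.le),
      (div_le_iff₀ ha).mpr (le_one_add_mul_aParam hc.le)⟩
  have hsplit : ∀ᶠ p in smallParamFilter',
      -1 + bParam p.1 p.2 * log (r p) = bParam p.1 p.2 * log (p.2 + c * p.1) := by
    filter_upwards [eventually_mem_smallParamFilter', eventually_log_aParam_ne_zero]
      with p ⟨⟨hα, _⟩, hθ⟩ hlog
    have ha : 0 < aParam p.1 p.2 := hα.trans_le (le_max_left _ _)
    rw [log_div (by positivity) ha.ne', mul_sub, bParam_mul_log_aParam hlog]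
    ring
  have hbounded : IsBoundedUnder (· ≤ ·) smallParamFilter' (fun p => ‖log (r p)‖) :=
    isBoundedUnder_of_eventually_le <| hr.mono fun p hp =>
      abs_log_le_of_mem_Icc (lt_min one_pos hc) hp
  simpa using (tendsto_const_nhds (x := (-1 : ℝ))).add
    (tendsto_bParam_smallParamFilter'.zero_mul_isBoundedUnder_le hbounded) |>.congr' hsplit

/-- For fixed `n ≥ 1`, `b(α,θ) log C_{α,θ,n} → -n` as `a(α,θ) → 0` over pairs `(α,θ)` with
`α ∈ (0,1)` and `θ > 0`. -/
theorem tendsto_bParam_log_Cconst (n : ℕ) (hn : 1 ≤ n) :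
    Filter.Tendsto (fun p : ℝ × ℝ => bParam p.1 p.2 * Real.log (Cconst p.1 p.2 n))
      smallParamFilter' (nhds (-(n : ℝ))) := by
  obtain ⟨m, rfl⟩ := Nat.exists_eq_add_of_le' hn
  have hα := tendsto_fst_smallParamFilter'
  have hθ := tendsto_snd_smallParamFilter'
  have hfactors := tendsto_finsetSum (Finset.range (m + 1)) fun k _ =>
    tendsto_bParam_mul_log_snd_add_mul (c := (k : ℝ) + 1) (by positivity)
  have hGamma : Tendsto (fun p : ℝ × ℝ => log (Gamma (p.2 + 1)) -
      log (Gamma (p.2 + (m + 1) * p.1 + 1)) - (m + 1) * log (Gamma (1 - p.1)))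
      smallParamFilter' (𝓝 0) := by
    have h1 := tendsto_log_Gamma_of_tendsto_one (by simpa using hθ.add_const (1 : ℝ))
    have h2 := tendsto_log_Gamma_of_tendsto_one
      (by simpa using ((hθ.add (hα.const_mul ((m : ℝ) + 1))).add_const (1 : ℝ)))
    have h3 := tendsto_log_Gamma_of_tendsto_one (by simpa using hα.const_sub (1 : ℝ))
    simpa using (h1.sub h2).sub (h3.const_mul ((m : ℝ) + 1))
  have hsum := hfactors.add (tendsto_bParam_smallParamFilter'.mul hGamma)
  rw [mul_zero, add_zero, Finset.sum_const, Finset.card_range, nsmul_eq_mul, mul_neg_one] at hsum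
  refine hsum.congr' ?_
  filter_upwards [eventually_mem_smallParamFilter'] with p hp
  rw [log_Cconst_succ hp.1 hp.2, mul_add, Finset.mul_sum]
end
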